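/- For T_A > T_B > 0 and E > 0, there exist a natural number n and a unitary U on (ℂ²)^{⊗ 2n} such that tr(U ρ U† H) < tr(ρ H), where ρ = γ_{T_A}^{⊗ n} ⊗ γ_{T_B}^{⊗ n} with γ_T = diag(1, e^{−E/T})/(1 + e^{−E/T}), and H is the diagonal Hamiltonian with H e_b = E · wgt(b) · e_b for b ∈ {0,1}^{2n}. -/

import Mathlib

/-- The Gibbs occupation probability of level `j ∈ {0,1}` of a two-level
system with energy gap `E` at temperature `T`. -/
noncomputable def qubitProb (E T : ℝ) (j : Fin 2) : ℝ :=
  (if j = 0 then 1 else Real.exp (-E / T)) / (1 + Real.exp (-E / T))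

/-!
A diagonal state whose populations are not ordered opposite to the energies is not passive: if
`p b₀ > p b₁` while `h b₀ > h b₁`, swapping the two basis states lowers the mean energy by
`(p b₀ - p b₁) (h b₀ - h b₁)`. For `n` hot and `n` cold qubits, compare `b₀` = all hot qubits
excited (energy `nE`, weight `e^{-nE/T_A}`) with `b₁` = `n - 1` cold qubits excited (energy
`(n-1)E`, weight `e^{-(n-1)E/T_B}`); once `n (T_A - T_B) > T_A`, the latter weight is the smaller.
-/

open Matrix Finset

namespace Matrix

variable {n R : Type*} [Fintype n] [DecidableEq n]

lemma permMatrix_mem_unitaryGroup [CommRing R] [StarRing R] (σ : Equiv.Perm n) :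
    σ.permMatrix R ∈ unitaryGroup n R := by
  rw [mem_unitaryGroup_iff, star_eq_conjTranspose, conjTranspose_permMatrix, ← permMatrix_mul,
    inv_mul_cancel, permMatrix_one]

lemma permMatrix_mul_diagonal_mul_permMatrix_inv [CommRing R] (σ : Equiv.Perm n) (d : n → R) :
    σ.permMatrix R * diagonal d * (σ⁻¹).permMatrix R = diagonal (d ∘ σ) := by
  rw [Equiv.Perm.permMatrix, Equiv.Perm.permMatrix, PEquiv.toMatrix_toPEquiv_mul,
    PEquiv.mul_toMatrix_toPEquiv, submatrix_submatrix]
  exact submatrix_diagonal_equiv d σ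

end Matrix

lemma sum_comp_swap_mul_lt {ι R : Type*} [Fintype ι] [DecidableEq ι] [CommRing R] [LinearOrder R]
    [IsStrictOrderedRing R] {p h : ι → R} {b₀ b₁ : ι} (hp : p b₁ < p b₀) (hh : h b₁ < h b₀) :
    ∑ c, p (Equiv.swap b₀ b₁ c) * h c < ∑ c, p c * h c := by
  have hne : b₀ ≠ b₁ := fun he => hp.ne' (congrArg p he)
  have hdiff : ∑ c, (p (Equiv.swap b₀ b₁ c) * h c - p c * h c)
      = -((p b₀ - p b₁) * (h b₀ - h b₁)) := by
    rw [Fintype.sum_eq_add b₀ b₁ hne fun c hc => by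
      rw [Equiv.swap_apply_of_ne_of_ne hc.1 hc.2, sub_self]]
    simp only [Equiv.swap_apply_left, Equiv.swap_apply_right]
    ring
  rw [sum_sub_distrib] at hdiff
  linarith [mul_pos (sub_pos.2 hp) (sub_pos.2 hh)]

theorem exists_unitary_trace_lt_of_inversion {ι : Type*} [Fintype ι] [DecidableEq ι] {p h : ι → ℝ}
    {b₀ b₁ : ι} (hp : p b₁ < p b₀) (hh : h b₁ < h b₀) :
    ∃ U ∈ unitaryGroup ι ℂ,
      (trace (U * diagonal (fun b => (p b : ℂ)) * star U * diagonal (fun b => (h b : ℂ)))).re <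
        (trace (diagonal (fun b => (p b : ℂ)) * diagonal (fun b => (h b : ℂ)))).re := by
  refine ⟨(Equiv.swap b₀ b₁).permMatrix ℂ, permMatrix_mem_unitaryGroup _, ?_⟩
  rw [star_eq_conjTranspose, conjTranspose_permMatrix, permMatrix_mul_diagonal_mul_permMatrix_inv,
    diagonal_mul_diagonal, diagonal_mul_diagonal, trace_diagonal, trace_diagonal]
  simpa only [Function.comp_apply, ← Complex.ofReal_mul, Complex.re_sum, Complex.ofReal_re]
    using sum_comp_swap_mul_lt hp hh

lemma qubitProb_eq_exp (E T : ℝ) (j : Fin 2) :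
    qubitProb E T j = Real.exp (-E / T * (j : ℕ)) / (1 + Real.exp (-E / T)) := by
  fin_cases j <;> simp [qubitProb]

section Qubits

variable {ι : Type*} [Fintype ι]

noncomputable def qubitsGibbs (E : ℝ) (T : ι → ℝ) (b : ι → Fin 2) : ℝ :=
  ∏ i, qubitProb E (T i) (b i)

def qubitsEnergy (E : ℝ) (b : ι → Fin 2) : ℝ := E * ∑ i, ((b i : ℕ) : ℝ)

lemma qubitsGibbs_eq (E : ℝ) (T : ι → ℝ) (b : ι → Fin 2) :
    qubitsGibbs E T b =
      Real.exp (-E * ∑ i, ((b i : ℕ) : ℝ) / T i) / ∏ i, (1 + Real.exp (-E / T i)) := by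
  simp only [qubitsGibbs, qubitProb_eq_exp, prod_div_distrib, ← Real.exp_sum, mul_sum]
  congr 3 with i
  ring

lemma qubitsGibbs_lt_qubitsGibbs {E : ℝ} (hE : 0 < E) (T : ι → ℝ) {b b' : ι → Fin 2}
    (h : ∑ i, ((b i : ℕ) : ℝ) / T i < ∑ i, ((b' i : ℕ) : ℝ) / T i) :
    qubitsGibbs E T b' < qubitsGibbs E T b := by
  rw [qubitsGibbs_eq, qubitsGibbs_eq]
  exact div_lt_div_of_pos_right (Real.exp_lt_exp.mpr (mul_lt_mul_of_neg_left h (by linarith)))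
    (by positivity)

variable [DecidableEq ι]

def excitedOn (s : Finset ι) (i : ι) : Fin 2 := if i ∈ s then 1 else 0

lemma sum_excitedOn (s : Finset ι) : ∑ i, ((excitedOn s i : ℕ) : ℝ) = #s := by
  simp [excitedOn, apply_ite]

lemma sum_excitedOn_div (s : Finset ι) (T : ι → ℝ) :
    ∑ i, ((excitedOn s i : ℕ) : ℝ) / T i = ∑ i ∈ s, (T i)⁻¹ := by
  simp [excitedOn, apply_ite, ite_div]

theorem exists_unitary_qubitsEnergy_lt {E : ℝ} (hE : 0 < E) (T : ι → ℝ)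
    {s₀ s₁ : Finset ι} (hcard : #s₁ < #s₀) (hinv : ∑ i ∈ s₀, (T i)⁻¹ < ∑ i ∈ s₁, (T i)⁻¹) :
    ∃ U ∈ unitaryGroup (ι → Fin 2) ℂ,
      (trace (U * diagonal (fun b => (qubitsGibbs E T b : ℂ)) * star U *
          diagonal (fun b => (qubitsEnergy E b : ℂ)))).re <
        (trace (diagonal (fun b => (qubitsGibbs E T b : ℂ)) *
          diagonal (fun b => (qubitsEnergy E b : ℂ)))).re := by
  refine exists_unitary_trace_lt_of_inversion (b₀ := excitedOn s₀) (b₁ := excitedOn s₁) ?_ ?_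
  · apply qubitsGibbs_lt_qubitsGibbs hE
    rwa [sum_excitedOn_div, sum_excitedOn_div]
  · rw [qubitsEnergy, qubitsEnergy, sum_excitedOn, sum_excitedOn]
    gcongr

end Qubits

theorem stmt_12 (E T_A T_B : ℝ) (hE : 0 < E) (hTB : 0 < T_B) (hT : T_B < T_A) :
    ∃ n : ℕ, ∃ U ∈ Matrix.unitaryGroup (Fin (n + n) → Fin 2) ℂ,
      (Matrix.trace (U *
          Matrix.diagonal (fun b : Fin (n + n) → Fin 2 =>
            ((∏ i : Fin (n + n), qubitProb E (if (i : ℕ) < n then T_A else T_B) (b i) : ℝ) : ℂ)) *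
          star U *
          Matrix.diagonal (fun b : Fin (n + n) → Fin 2 =>
            ((E * ∑ i, ((b i : ℕ) : ℝ) : ℝ) : ℂ)))).re <
      (Matrix.trace (
          Matrix.diagonal (fun b : Fin (n + n) → Fin 2 =>
            ((∏ i : Fin (n + n), qubitProb E (if (i : ℕ) < n then T_A else T_B) (b i) : ℝ) : ℂ)) *
          Matrix.diagonal (fun b : Fin (n + n) → Fin 2 =>
            ((E * ∑ i, ((b i : ℕ) : ℝ) : ℝ) : ℂ)))).re := by
  obtain ⟨n, hn⟩ := exists_nat_gt (T_A / (T_A - T_B))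
  have hn₀ : 0 < n := by
    have : 0 < T_A / (T_A - T_B) := div_pos (hTB.trans hT) (sub_pos.mpr hT)
    exact_mod_cast this.trans hn
  let a : Fin (n + n) := ⟨n, by omega⟩
  refine ⟨n, exists_unitary_qubitsEnergy_lt hE _ (s₀ := Iio a) (s₁ := Ioi a) ?_ ?_⟩
  · simp only [Fin.card_Iio, Fin.card_Ioi, a]
    omega
  · have hs₀ : ∑ i ∈ Iio a, (if (i : ℕ) < n then T_A else T_B)⁻¹ = n * T_A⁻¹ := by
      rw [sum_eq_card_nsmul (b := T_A⁻¹) fun i hi => by simp [Fin.lt_def.mp (mem_Iio.mp hi), a]]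
      simp [a]
    have hs₁ : ∑ i ∈ Ioi a, (if (i : ℕ) < n then T_A else T_B)⁻¹ = (n - 1 : ℕ) * T_B⁻¹ := by
      rw [sum_eq_card_nsmul (b := T_B⁻¹) fun i hi => by
        simp [(Fin.lt_def.mp (mem_Ioi.mp hi)).not_gt, a]]
      simp [a, show n + n - 1 - n = n - 1 by omega]
    have hn' : T_A < n * (T_A - T_B) := (div_lt_iff₀ (sub_pos.mpr hT)).mp hn
    rw [hs₀, hs₁, Nat.cast_pred hn₀, ← div_eq_mul_inv, ← div_eq_mul_inv,
      div_lt_div_iff₀ (hTB.trans hT) hTB]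
    linarith
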